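/- If a multi-round mechanism chooses allocations at round t via max-min fairness using upper-bound demands dub_{it} >= Dtrue_{it} as the reported demands, then the instantaneous loss satisfies lot_t <= sum_{i=1}^n (dub_{it} - Dtrue_{it}), where lot_t = min(L_UR + L_OR, L_UD) as defined via the true demands. -/

import Mathlib

/-!
Max-min fairness either hands out the whole resource, so `L_UR = 0` and, as no agent gets more
than her reported demand, each over-allocation is at most `dub i - Dtrue i`; or it leaves
some resource unused, in which case every agent gets her full reported demand and no true
demand is left unmet.
-/

open Finset

/-- Max-min fairness allocation, characterized as weighted water-filling. -/
def IsMMF {n : ℕ} (e d a : Fin n → ℝ) : Prop :=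
  ∃ lam : ℝ, 0 ≤ lam ∧ (∀ i, a i = min (d i) (lam * e i)) ∧
    (∑ i, a i = min 1 (∑ i, d i))

namespace IsMMF

variable {n : ℕ} {e d a : Fin n → ℝ}

theorem le_demand (h : IsMMF e d a) (i : Fin n) : a i ≤ d i := by
  obtain ⟨_, -, ha, -⟩ := h
  exact (ha i).trans_le (min_le_left _ _)

theorem sum_le_one (h : IsMMF e d a) : ∑ i, a i ≤ 1 := by
  obtain ⟨-, -, -, hsum⟩ := h
  exact hsum.trans_le (min_le_left _ _)

theorem eq_demand_of_sum_lt_one (h : IsMMF e d a) (hlt : ∑ i, a i < 1) : a = d := by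
  have hsum : ∑ i, a i = ∑ i, d i := by
    obtain ⟨-, -, -, hsum⟩ := h
    rw [hsum] at hlt ⊢
    exact min_eq_right ((min_lt_iff.1 hlt).resolve_left (lt_irrefl 1)).le
  funext i
  exact (sum_eq_sum_iff_of_le fun i _ => h.le_demand i).1 hsum i (mem_univ i)

end IsMMF

theorem mmf_loss_of_upper_bounds_general {n : ℕ} (e Dtrue dub a : Fin n → ℝ)
    (hub : ∀ i, Dtrue i ≤ dub i)
    (hmmf : IsMMF e dub a) :
    min ((1 - ∑ i, a i) + ∑ i, max (a i - Dtrue i) 0)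
        (∑ i, max (Dtrue i - a i) 0)
      ≤ ∑ i, (dub i - Dtrue i) := by
  rcases hmmf.sum_le_one.lt_or_eq with hunused | hexhausted
  · obtain rfl := hmmf.eq_demand_of_sum_lt_one hunused
    refine (min_le_right _ _).trans (sum_le_sum fun i _ => ?_)
    exact max_le (by linarith [hub i]) (sub_nonneg.2 (hub i))
  · refine (min_le_left _ _).trans ?_
    rw [hexhausted, sub_self, zero_add]
    exact sum_le_sum fun i _ =>
      max_le (sub_le_sub_right (hmmf.le_demand i) _) (sub_nonneg.2 (hub i))

/-- If the allocations on a round are chosen via max-min fairness using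
upper bounds `dub i ≥ Dtrue i` on the true demands as the reported demands,
then the instantaneous loss `min (L_UR + L_OR, L_UD)` (defined with respect to
the true demands) is at most `∑ (dub i - Dtrue i)`. -/
theorem mmf_loss_of_upper_bounds {n : ℕ} (e Dtrue dub a : Fin n → ℝ)
    (he : ∀ i, 0 < e i) (hesum : ∑ i, e i = 1)
    (hD : ∀ i, 0 ≤ Dtrue i) (hub : ∀ i, Dtrue i ≤ dub i)
    (hmmf : IsMMF e dub a) :
    min ((1 - ∑ i, a i) + ∑ i, max (a i - Dtrue i) 0)
        (∑ i, max (Dtrue i - a i) 0)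
      ≤ ∑ i, (dub i - Dtrue i) :=
  mmf_loss_of_upper_bounds_general e Dtrue dub a hub hmmf
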